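/- arXiv:1007.0154 — 3 statements merged into one kernel-verified Lean document; each statement's English description precedes it below -/
import Mathlib

section
/- Let D ∈ ℕ with D ≥ 1, β ≥ 0, and p ∈ ℕ with p ≥ 1. Let A be the complex Banach space of functions c : ℤ^D → ℂ with ‖c‖_β := Σ_{m ∈ ℤ^D} e^{β|m|₁} |c(m)| < ∞, equipped with the convolution product (a ⋆ b)(m) = Σ_k a(k) b(m−k), and define the involution c̃(m) := conj(c(−m)). Then the map Φ : A → A, Φ(c) = (c ⋆ c̃)^{⋆p} ⋆ c, is Fréchet differentiable as a map between real Banach spaces, and its real derivative at c is the ℝ-linear map w ↦ (p+1) (c ⋆ c̃)^{⋆p} ⋆ w + p (c ⋆ c̃)^{⋆(p−1)} ⋆ c ⋆ c ⋆ w̃, where for p = 1 the factor (c ⋆ c̃)^{⋆0} is the convolution identity (the delta function at 0). -/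
open scoped BigOperators

noncomputable section

/-- Convolution of functions on a lattice `L`. -/
def conv {L : Type} [AddCommGroup L] (a b : L → ℂ) : L → ℂ :=
  fun m => ∑' k : L, a k * b (m - k)

/-- `p`-fold convolution power (`convPow a 0` is the convolution identity δ₀). -/
def convPow {L : Type} [AddCommGroup L] [DecidableEq L] (a : L → ℂ) : ℕ → (L → ℂ)
  | 0 => fun m => if m = 0 then 1 else 0
  | n + 1 => conv (convPow a n) a

/-- The involution `c̃(m) = conj (c (−m))`. -/
def tilde {L : Type} [AddCommGroup L] (c : L → ℂ) : L → ℂ :=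
  fun m => starRingEnd ℂ (c (-m))

/-- Finiteness of the weighted Wiener norm on `ℤ^D`. -/
def WSummable {D : ℕ} (β : ℝ) (a : (Fin D → ℤ) → ℂ) : Prop :=
  Summable fun m : Fin D → ℤ => Real.exp (β * ∑ i, |(m i : ℝ)|) * ‖a m‖

/-- The weighted Wiener norm `‖a‖_β = Σ_m e^{β|m|₁} |a m|`. -/
def wnorm {D : ℕ} (β : ℝ) (a : (Fin D → ℤ) → ℂ) : ℝ :=
  ∑' m : Fin D → ℤ, Real.exp (β * ∑ i, |(m i : ℝ)|) * ‖a m‖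

/-- The nonlinear map `Φ(c) = (c ⋆ c̃)^{⋆p} ⋆ c`. -/
def Phi {D : ℕ} (p : ℕ) (c : (Fin D → ℤ) → ℂ) : (Fin D → ℤ) → ℂ :=
  conv (convPow (conv c (tilde c)) p) c

/-- The claimed real derivative of `Φ` at `c`:
`w ↦ (p+1) (c ⋆ c̃)^{⋆p} ⋆ w + p (c ⋆ c̃)^{⋆(p−1)} ⋆ c ⋆ c ⋆ w̃`. -/
def Lder {D : ℕ} (p : ℕ) (c w : (Fin D → ℤ) → ℂ) : (Fin D → ℤ) → ℂ :=
  fun m => ((p : ℂ) + 1) * conv (convPow (conv c (tilde c)) p) w m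
    + (p : ℂ) * conv (conv (conv (convPow (conv c (tilde c)) (p - 1)) c) c) (tilde w) m

/-!
For `β ≥ 0` the weight `e^{β|m|₁}` is submultiplicative, so the weighted `ℓ¹` space is a
commutative normed algebra under convolution, on which `c ↦ c̃` is a real-linear isometry.
In that algebra `Φ(c) = (c c̃)^p c` is a polynomial in `c` and `c̃`, so the product and power
rules give its Fréchet derivative; collecting terms with the commutativity of convolution turns
it into `(p+1) (c c̃)^p w + p (c c̃)^{p-1} c c w̃`.
-/

open scoped NNReal

section Convolution

variable {L : Type} [AddCommGroup L]

theorem conv_comm (a b : L → ℂ) : conv a b = conv b a := by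
  funext m
  rw [conv, conv, ← (Equiv.subLeft m).tsum_eq]
  simp only [Equiv.subLeft_apply, sub_sub_cancel, mul_comm]

theorem conv_smul_left (z : ℂ) (a b : L → ℂ) : conv (z • a) b = z • conv a b := by
  funext m
  simp only [conv, Pi.smul_apply, smul_eq_mul, ← tsum_mul_left, mul_assoc]

theorem conv_smul_right (z : ℂ) (a b : L → ℂ) : conv a (z • b) = z • conv a b := by
  rw [conv_comm, conv_smul_left, conv_comm]

theorem conv_single_zero [DecidableEq L] (a : L → ℂ) : conv a (Pi.single 0 1) = a := by
  funext m
  rw [conv, tsum_eq_single m fun k hk => by simp [sub_eq_zero, Ne.symm hk]]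
  simp

section Nonneg

variable {f g : L → ℝ}

theorem hasSum_mul_comp_sub (hf0 : 0 ≤ f) (hg0 : 0 ≤ g) (hf : Summable f) (hg : Summable g) :
    HasSum (fun q : L × L => f q.1 * g (q.2 - q.1)) ((∑' k, f k) * ∑' j, g j) := by
  rw [← (Equiv.prodShear (Equiv.refl L) Equiv.addLeft).hasSum_iff]
  simpa [Function.comp_def] using hf.hasSum.mul hg.hasSum (hf.mul_of_nonneg hg hf0 hg0)

theorem summable_mul_comp_sub (hf0 : 0 ≤ f) (hg0 : 0 ≤ g) (hf : Summable f) (hg : Summable g)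
    (m : L) : Summable fun k => f k * g (m - k) :=
  (hasSum_mul_comp_sub hf0 hg0 hf hg).summable.prod_symm.prod_factor m

theorem hasSum_tsum_mul_comp_sub (hf0 : 0 ≤ f) (hg0 : 0 ≤ g) (hf : Summable f) (hg : Summable g) :
    HasSum (fun m => ∑' k, f k * g (m - k)) ((∑' k, f k) * ∑' j, g j) := by
  have h := hasSum_mul_comp_sub hf0 hg0 hf hg
  rw [← (Equiv.prodComm L L).hasSum_iff] at h
  exact h.prod_fiberwise fun m => (summable_mul_comp_sub hf0 hg0 hf hg m).hasSum

end Nonneg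

variable {a b d : L → ℂ}

theorem summable_conv_terms (ha : Summable (‖a ·‖)) (hb : Summable (‖b ·‖)) (m : L) :
    Summable fun k => a k * b (m - k) :=
  .of_norm <| by
    simpa only [norm_mul] using
      summable_mul_comp_sub (fun _ => norm_nonneg _) (fun _ => norm_nonneg _) ha hb m

theorem conv_add_right (ha : Summable (‖a ·‖)) (hb : Summable (‖b ·‖))
    {b' : L → ℂ} (hb' : Summable (‖b' ·‖)) : conv a (b + b') = conv a b + conv a b' := by
  funext m
  simp only [conv, Pi.add_apply, mul_add]
  exact (summable_conv_terms ha hb m).tsum_add (summable_conv_terms ha hb' m)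

theorem conv_add_left {a' : L → ℂ} (ha : Summable (‖a ·‖)) (ha' : Summable (‖a' ·‖))
    (hb : Summable (‖b ·‖)) : conv (a + a') b = conv a b + conv a' b := by
  rw [conv_comm, conv_add_right hb ha ha', conv_comm, conv_comm b]

theorem conv_assoc (ha : Summable (‖a ·‖)) (hb : Summable (‖b ·‖)) (hd : Summable (‖d ·‖)) :
    conv (conv a b) d = conv a (conv b d) := by
  funext m
  set H : L → L → ℂ := fun j k => a j * b (k - j) * d (m - k)
  have hH : Summable (Function.uncurry H) := by
    refine .of_norm_bounded ((hasSum_mul_comp_sub (fun _ => norm_nonneg _)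
      (fun _ => norm_nonneg _) ha hb).summable.mul_right (∑' n, ‖d n‖)) fun q => ?_
    simp only [Function.uncurry, H, norm_mul]
    exact mul_le_mul_of_nonneg_left (hd.le_tsum _ fun _ _ => norm_nonneg _) (by positivity)
  calc conv (conv a b) d m = ∑' k, ∑' j, H j k := by
        simp only [conv, H, ← tsum_mul_right]
    _ = ∑' j, ∑' k, H j k := hH.tsum_comm
    _ = conv a (conv b d) m := by
        refine tsum_congr fun j => ?_
        rw [conv, ← tsum_mul_left, ← (Equiv.addLeft j).tsum_eq]
        simp only [H, Equiv.coe_addLeft, add_sub_cancel_left, sub_add_eq_sub_sub, mul_assoc]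

end Convolution

section Weighted

variable {L : Type} {ρ : L → ℝ}

theorem weight_mul_norm_nonneg (hρ : ∀ m, 0 < ρ m) (a : L → ℂ) : 0 ≤ fun m => ρ m * ‖a m‖ :=
  fun m => mul_nonneg (hρ m).le (norm_nonneg _)

variable [AddCommGroup L] {a b : L → ℂ}

theorem weight_mul_norm_conv_le (hρ : ∀ m, 0 < ρ m) (hρ_add : ∀ k j, ρ (k + j) ≤ ρ k * ρ j)
    (ha : Summable fun m => ρ m * ‖a m‖) (hb : Summable fun m => ρ m * ‖b m‖) (m : L) :
    ρ m * ‖conv a b m‖ ≤ ∑' k, ρ k * ‖a k‖ * (ρ (m - k) * ‖b (m - k)‖) := by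
  have hS := summable_mul_comp_sub (weight_mul_norm_nonneg hρ a) (weight_mul_norm_nonneg hρ b)
    ha hb m
  rw [← le_div_iff₀' (hρ m), conv]
  refine tsum_of_norm_bounded (hS.hasSum.div_const (ρ m)) fun k => ?_
  rw [le_div_iff₀ (hρ m), norm_mul]
  calc ‖a k‖ * ‖b (m - k)‖ * ρ m ≤ ‖a k‖ * ‖b (m - k)‖ * (ρ k * ρ (m - k)) := by
        gcongr
        simpa using hρ_add k (m - k)
    _ = ρ k * ‖a k‖ * (ρ (m - k) * ‖b (m - k)‖) := by ring

theorem summable_weight_mul_norm_conv (hρ : ∀ m, 0 < ρ m)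
    (hρ_add : ∀ k j, ρ (k + j) ≤ ρ k * ρ j)
    (ha : Summable fun m => ρ m * ‖a m‖) (hb : Summable fun m => ρ m * ‖b m‖) :
    Summable fun m => ρ m * ‖conv a b m‖ :=
  (hasSum_tsum_mul_comp_sub (weight_mul_norm_nonneg hρ a) (weight_mul_norm_nonneg hρ b)
    ha hb).summable.of_nonneg_of_le (weight_mul_norm_nonneg hρ _)
    (weight_mul_norm_conv_le hρ hρ_add ha hb)

theorem tsum_weight_mul_norm_conv_le (hρ : ∀ m, 0 < ρ m)
    (hρ_add : ∀ k j, ρ (k + j) ≤ ρ k * ρ j)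
    (ha : Summable fun m => ρ m * ‖a m‖) (hb : Summable fun m => ρ m * ‖b m‖) :
    ∑' m, ρ m * ‖conv a b m‖ ≤ (∑' m, ρ m * ‖a m‖) * ∑' m, ρ m * ‖b m‖ := by
  have h := hasSum_tsum_mul_comp_sub (weight_mul_norm_nonneg hρ a)
    (weight_mul_norm_nonneg hρ b) ha hb
  exact h.tsum_eq ▸ (summable_weight_mul_norm_conv hρ hρ_add ha hb).tsum_le_tsum
    (weight_mul_norm_conv_le hρ hρ_add ha hb) h.summable

end Weighted

section ExpWeight

variable {D : ℕ} {β : ℝ}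

def expWeight (β : ℝ) (m : Fin D → ℤ) : ℝ := Real.exp (β * ∑ i, |(m i : ℝ)|)

theorem expWeight_pos (m : Fin D → ℤ) : 0 < expWeight β m := Real.exp_pos _

theorem one_le_expWeight (hβ : 0 ≤ β) (m : Fin D → ℤ) : 1 ≤ expWeight β m :=
  Real.one_le_exp (mul_nonneg hβ (Finset.sum_nonneg fun _ _ => abs_nonneg _))

theorem expWeight_neg (m : Fin D → ℤ) : expWeight β (-m) = expWeight β m := by
  simp [expWeight]

theorem expWeight_add_le (hβ : 0 ≤ β) (k j : Fin D → ℤ) :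
    expWeight β (k + j) ≤ expWeight β k * expWeight β j := by
  rw [expWeight, expWeight, expWeight, ← Real.exp_add, ← mul_add, ← Finset.sum_add_distrib]
  gcongr with i
  push_cast [Pi.add_apply]
  exact abs_add_le _ _

end ExpWeight

section WienerNorm

variable {D : ℕ} {β : ℝ} {a b : (Fin D → ℤ) → ℂ}

theorem wsummable_iff : WSummable β a ↔ Summable fun m => expWeight β m * ‖a m‖ := Iff.rfl

theorem wnorm_eq : wnorm β a = ∑' m, expWeight β m * ‖a m‖ := rfl

theorem WSummable.summable_norm (hβ : 0 ≤ β) (ha : WSummable β a) : Summable (‖a ·‖) :=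
  ha.of_nonneg_of_le (fun _ => norm_nonneg _) fun m =>
    le_mul_of_one_le_left (norm_nonneg _) (one_le_expWeight hβ m)

theorem expWeight_mul_norm_add_le (m : Fin D → ℤ) :
    expWeight β m * ‖(a + b) m‖ ≤ expWeight β m * ‖a m‖ + expWeight β m * ‖b m‖ := by
  rw [← mul_add]
  exact mul_le_mul_of_nonneg_left (norm_add_le _ _) (expWeight_pos m).le

theorem WSummable.add (ha : WSummable β a) (hb : WSummable β b) : WSummable β (a + b) :=
  (Summable.add ha hb).of_nonneg_of_le (weight_mul_norm_nonneg expWeight_pos _)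
    expWeight_mul_norm_add_le

theorem WSummable.smul (z : ℂ) (ha : WSummable β a) : WSummable β (z • a) := by
  rw [wsummable_iff] at ha ⊢
  simpa only [Pi.smul_apply, norm_smul, mul_left_comm] using ha.mul_left ‖z‖

theorem WSummable.neg (ha : WSummable β a) : WSummable β (-a) := by
  simpa using ha.smul (-1)

theorem WSummable.sub (ha : WSummable β a) (hb : WSummable β b) : WSummable β (a - b) := by
  simpa [sub_eq_add_neg] using ha.add hb.neg

theorem WSummable.tilde (ha : WSummable β a) : WSummable β (tilde a) := by
  rw [wsummable_iff, ← (Equiv.neg _).summable_iff]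
  simpa [Function.comp_def, _root_.tilde, expWeight_neg] using wsummable_iff.1 ha

theorem WSummable.conv (hβ : 0 ≤ β) (ha : WSummable β a) (hb : WSummable β b) :
    WSummable β (conv a b) :=
  summable_weight_mul_norm_conv expWeight_pos (expWeight_add_le hβ) ha hb

theorem wsummable_single_zero : WSummable β (Pi.single (0 : Fin D → ℤ) 1) :=
  summable_of_ne_finset_zero (s := {0}) fun m hm => by simp_all

theorem wnorm_add_le (ha : WSummable β a) (hb : WSummable β b) :
    wnorm β (a + b) ≤ wnorm β a + wnorm β b := by
  rw [wsummable_iff] at ha hb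
  rw [wnorm_eq, wnorm_eq, wnorm_eq, ← ha.tsum_add hb]
  exact (WSummable.add ha hb).tsum_le_tsum expWeight_mul_norm_add_le (ha.add hb)

theorem wnorm_smul (z : ℂ) (a : (Fin D → ℤ) → ℂ) : wnorm β (z • a) = ‖z‖ * wnorm β a := by
  simp only [wnorm, Pi.smul_apply, norm_smul, mul_left_comm _ ‖z‖, tsum_mul_left]

theorem wnorm_tilde (a : (Fin D → ℤ) → ℂ) : wnorm β (tilde a) = wnorm β a := by
  rw [wnorm_eq, ← (Equiv.neg _).tsum_eq]
  simp [tilde, expWeight_neg, wnorm_eq]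

theorem wnorm_conv_le (hβ : 0 ≤ β) (ha : WSummable β a) (hb : WSummable β b) :
    wnorm β (conv a b) ≤ wnorm β a * wnorm β b :=
  tsum_weight_mul_norm_conv_le expWeight_pos (expWeight_add_le hβ) ha hb

theorem eq_zero_of_wnorm_eq_zero (ha : WSummable β a) (h : wnorm β a = 0) : a = 0 := by
  rw [wnorm_eq] at h
  have := (hasSum_zero_iff_of_nonneg (weight_mul_norm_nonneg expWeight_pos a)).1
    (h ▸ ha.hasSum)
  funext m
  simpa [(expWeight_pos m).ne'] using congrFun this m

end WienerNorm

-- A structure rather than a subtype of `(Fin D → ℤ) → ℂ`, so that its only topology is the one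
-- of the weighted norm.
@[ext]
structure Wiener (D : ℕ) (β : ℝ≥0) where
  val : (Fin D → ℤ) → ℂ
  wsummable : WSummable β val

namespace Wiener

variable {D : ℕ} {β : ℝ≥0}

instance : Zero (Wiener D β) := ⟨⟨0, by simp [wsummable_iff]⟩⟩
instance : Add (Wiener D β) := ⟨fun x y => ⟨x.val + y.val, x.wsummable.add y.wsummable⟩⟩
instance : SMul ℂ (Wiener D β) := ⟨fun z x => ⟨z • x.val, x.wsummable.smul z⟩⟩
instance : Neg (Wiener D β) := ⟨fun x => ⟨-x.val, x.wsummable.neg⟩⟩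
instance : Sub (Wiener D β) := ⟨fun x y => ⟨x.val - y.val, x.wsummable.sub y.wsummable⟩⟩
instance : SMul ℕ (Wiener D β) := ⟨fun n x => (n : ℂ) • x⟩
instance : SMul ℤ (Wiener D β) := ⟨fun n x => (n : ℂ) • x⟩

@[simp] theorem val_zero : (0 : Wiener D β).val = 0 := rfl
@[simp] theorem val_add (x y : Wiener D β) : (x + y).val = x.val + y.val := rfl
@[simp] theorem val_smul (z : ℂ) (x : Wiener D β) : (z • x).val = z • x.val := rfl
@[simp] theorem val_neg (x : Wiener D β) : (-x).val = -x.val := rfl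
@[simp] theorem val_sub (x y : Wiener D β) : (x - y).val = x.val - y.val := rfl
@[simp] theorem val_nsmul (n : ℕ) (x : Wiener D β) : (n • x).val = (n : ℂ) • x.val := rfl

instance : AddCommGroup (Wiener D β) :=
  Function.Injective.addCommGroup val (fun _ _ => Wiener.ext) rfl (fun _ _ => rfl) (fun _ => rfl)
    (fun _ _ => rfl) (fun x n => Nat.cast_smul_eq_nsmul ℂ n x.val)
    (fun x n => Int.cast_smul_eq_zsmul ℂ n x.val)

instance : Module ℂ (Wiener D β) :=
  Function.Injective.module ℂ ⟨⟨val, rfl⟩, fun _ _ => rfl⟩ (fun _ _ => Wiener.ext) fun _ _ => rfl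

instance : NormedAddCommGroup (Wiener D β) :=
  AddGroupNorm.toNormedAddCommGroup
    { toFun := fun x => wnorm β x.val
      map_zero' := by simp [wnorm_eq]
      add_le' := fun x y => wnorm_add_le x.wsummable y.wsummable
      neg' := fun x => by simp [wnorm_eq]
      eq_zero_of_map_eq_zero' := fun x h => Wiener.ext (eq_zero_of_wnorm_eq_zero x.wsummable h) }

theorem norm_def (x : Wiener D β) : ‖x‖ = wnorm β x.val := rfl

instance : Mul (Wiener D β) := ⟨fun x y => ⟨conv x.val y.val, x.wsummable.conv β.2 y.wsummable⟩⟩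
instance : One (Wiener D β) := ⟨⟨Pi.single 0 1, wsummable_single_zero⟩⟩

@[simp] theorem val_mul (x y : Wiener D β) : (x * y).val = conv x.val y.val := rfl
@[simp] theorem val_one : (1 : Wiener D β).val = Pi.single 0 1 := rfl

theorem summable_norm (x : Wiener D β) : Summable (‖x.val ·‖) := x.wsummable.summable_norm β.2

instance : CommRing (Wiener D β) :=
  { (inferInstance : AddCommGroup (Wiener D β)) with
    left_distrib := fun x y z => Wiener.ext <|
      conv_add_right x.summable_norm y.summable_norm z.summable_norm
    right_distrib := fun x y z => Wiener.ext <|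
      conv_add_left x.summable_norm y.summable_norm z.summable_norm
    zero_mul := fun x => Wiener.ext <| by funext m; simp [conv]
    mul_zero := fun x => Wiener.ext <| by funext m; simp [conv]
    mul_assoc := fun x y z => Wiener.ext <|
      conv_assoc x.summable_norm y.summable_norm z.summable_norm
    one_mul := fun x => Wiener.ext <| (conv_comm _ _).trans (conv_single_zero x.val)
    mul_one := fun x => Wiener.ext (conv_single_zero x.val)
    mul_comm := fun x y => Wiener.ext (conv_comm x.val y.val) }

theorem val_pow (x : Wiener D β) (n : ℕ) : (x ^ n).val = convPow x.val n := by
  induction n with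
  | zero => funext m; simp [convPow, Pi.single_apply]
  | succ n ih => rw [pow_succ, val_mul, ih, convPow]

instance : NormedCommRing (Wiener D β) :=
  { (inferInstance : NormedAddCommGroup (Wiener D β)), (inferInstance : CommRing (Wiener D β)) with
    norm_mul_le := fun x y => wnorm_conv_le β.2 x.wsummable y.wsummable }

instance : NormedAlgebra ℂ (Wiener D β) :=
  { Algebra.ofModule (fun z x y => Wiener.ext (conv_smul_left z x.val y.val))
      (fun z x y => Wiener.ext (conv_smul_right z x.val y.val)) with
    norm_smul_le := fun z x => (wnorm_smul z x.val).le }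

theorem val_real_smul (r : ℝ) (x : Wiener D β) : (r • x).val = r • x.val := by
  rw [← Complex.coe_smul, val_smul]
  funext m
  simp [Complex.real_smul]

def tildeCLM : Wiener D β →L[ℝ] Wiener D β :=
  LinearMap.mkContinuous
    { toFun := fun x => ⟨tilde x.val, x.wsummable.tilde⟩
      map_add' := fun x y => Wiener.ext <| by funext m; simp [tilde]
      map_smul' := fun r x => Wiener.ext <| by funext m; simp [tilde, val_real_smul] }
    1 fun x => by simp [norm_def, wnorm_tilde]

@[simp] theorem val_tildeCLM (x : Wiener D β) : (tildeCLM x).val = tilde x.val := rfl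

def phi (p : ℕ) (x : Wiener D β) : Wiener D β := (x * tildeCLM x) ^ p * x

def phiDeriv (p : ℕ) (x : Wiener D β) : Wiener D β →L[ℝ] Wiener D β :=
  ((p + 1) • (x * tildeCLM x) ^ p) • ContinuousLinearMap.id ℝ _
    + (p • ((x * tildeCLM x) ^ (p - 1) * x * x)) • tildeCLM

theorem hasFDerivAt_phi (p : ℕ) (x : Wiener D β) : HasFDerivAt (phi p) (phiDeriv p x) x := by
  have h := (((hasFDerivAt_id x).fun_mul (tildeCLM (D := D) (β := β)).hasFDerivAt).pow p).fun_mul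
    (hasFDerivAt_id x)
  refine h.congr_fderiv (ContinuousLinearMap.ext fun w => ?_)
  simp only [phiDeriv, add_apply, smul_apply, ContinuousLinearMap.id_apply, smul_eq_mul, id]
  rcases p with _ | q
  · simp
  · simp only [Nat.add_sub_cancel]
    ring

theorem val_phi (p : ℕ) (x : Wiener D β) : (phi p x).val = Phi p x.val := by
  rw [phi, val_mul, val_pow, val_mul, val_tildeCLM, Phi]

theorem val_phiDeriv (p : ℕ) (x w : Wiener D β) : (phiDeriv p x w).val = Lder p x.val w.val := by
  funext m
  simp only [phiDeriv, add_apply, smul_apply, ContinuousLinearMap.id_apply, smul_eq_mul, val_add,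
    val_mul, val_nsmul, val_pow, val_tildeCLM, conv_smul_left, Pi.add_apply, Pi.smul_apply, Lder]
  push_cast
  rfl

end Wiener

theorem HasFDerivAt.exists_norm_sub_sub_le {𝕜 E F : Type*} [NontriviallyNormedField 𝕜]
    [NormedAddCommGroup E] [NormedSpace 𝕜 E] [NormedAddCommGroup F] [NormedSpace 𝕜 F]
    {f : E → F} {f' : E →L[𝕜] F} {x : E} (hf : HasFDerivAt f f' x) {ε : ℝ} (hε : 0 < ε) :
    ∃ η > 0, ∀ h, ‖h‖ ≤ η → ‖f (x + h) - f x - f' h‖ ≤ ε * ‖h‖ := by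
  obtain ⟨η, hη, hball⟩ :=
    Metric.eventually_nhds_iff_ball.1 ((hasFDerivAt_iff_isLittleO_nhds_zero.1 hf).def hε)
  refine ⟨η / 2, half_pos hη, fun h hh => ?_⟩
  simpa using hball h (by simpa using hh.trans_lt (half_lt_self hη))

theorem stmt5_general (D p : ℕ) (β : ℝ) (hβ : 0 ≤ β)
    (c : (Fin D → ℤ) → ℂ) (hc : WSummable β c) :
    (∀ w w' : (Fin D → ℤ) → ℂ, WSummable β w → WSummable β w' →
        Lder p c (w + w') = Lder p c w + Lder p c w') ∧
    (∀ (r : ℝ) (w : (Fin D → ℤ) → ℂ), WSummable β w →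
        Lder p c (r • w) = r • Lder p c w) ∧
    (∃ C : ℝ, 0 ≤ C ∧ ∀ w : (Fin D → ℤ) → ℂ, WSummable β w →
        WSummable β (Lder p c w) ∧ wnorm β (Lder p c w) ≤ C * wnorm β w) ∧
    (∀ ε : ℝ, 0 < ε → ∃ η : ℝ, 0 < η ∧ ∀ w : (Fin D → ℤ) → ℂ,
        WSummable β w → wnorm β w ≤ η →
        WSummable β (Phi p (c + w) - Phi p c - Lder p c w) ∧
        wnorm β (Phi p (c + w) - Phi p c - Lder p c w) ≤ ε * wnorm β w) := by
  lift β to ℝ≥0 using hβ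
  obtain ⟨x, rfl⟩ : ∃ x : Wiener D β, x.val = c := ⟨⟨c, hc⟩, rfl⟩
  refine ⟨fun w w' hw hw' => ?_, fun r w hw => ?_,
    ⟨‖Wiener.phiDeriv p x‖, norm_nonneg _, fun w hw => ?_⟩, fun ε hε => ?_⟩
  · have h := congrArg Wiener.val (map_add (Wiener.phiDeriv p x) ⟨w, hw⟩ ⟨w', hw'⟩)
    simp only [Wiener.val_add, Wiener.val_phiDeriv] at h
    exact h
  · have h := congrArg Wiener.val (map_smul (Wiener.phiDeriv p x) r ⟨w, hw⟩)
    simp only [Wiener.val_real_smul, Wiener.val_phiDeriv] at h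
    exact h
  · rw [← Wiener.val_phiDeriv p x ⟨w, hw⟩]
    exact ⟨Wiener.wsummable _, (Wiener.phiDeriv p x).le_opNorm _⟩
  · obtain ⟨η, hη, hrem⟩ := (Wiener.hasFDerivAt_phi p x).exists_norm_sub_sub_le hε
    refine ⟨η, hη, fun w hw hwη => ?_⟩
    set v : Wiener D β := ⟨w, hw⟩
    have hval : Phi p (x.val + w) - Phi p x.val - Lder p x.val w =
        (Wiener.phi p (x + v) - Wiener.phi p x - Wiener.phiDeriv p x v).val := by
      simp only [Wiener.val_sub, Wiener.val_add, Wiener.val_phi, Wiener.val_phiDeriv, v]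
    rw [hval]
    exact ⟨Wiener.wsummable _, hrem v hwη⟩

/-- `Φ(c) = (c ⋆ c̃)^{⋆p} ⋆ c` is Fréchet differentiable (over `ℝ`) on the weighted Wiener
algebra, with derivative `w ↦ (p+1)(c ⋆ c̃)^{⋆p} ⋆ w + p (c ⋆ c̃)^{⋆(p−1)} ⋆ c ⋆ c ⋆ w̃`:
the derivative is `ℝ`-linear and bounded, and the first-order Taylor remainder is `o(‖w‖_β)`. -/
theorem stmt5 (D p : ℕ) (hD : 1 ≤ D) (hp : 1 ≤ p) (β : ℝ) (hβ : 0 ≤ β)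
    (c : (Fin D → ℤ) → ℂ) (hc : WSummable β c) :
    (∀ w w' : (Fin D → ℤ) → ℂ, WSummable β w → WSummable β w' →
        Lder p c (w + w') = Lder p c w + Lder p c w') ∧
    (∀ (r : ℝ) (w : (Fin D → ℤ) → ℂ), WSummable β w →
        Lder p c (r • w) = r • Lder p c w) ∧
    (∃ C : ℝ, 0 ≤ C ∧ ∀ w : (Fin D → ℤ) → ℂ, WSummable β w →
        WSummable β (Lder p c w) ∧ wnorm β (Lder p c w) ≤ C * wnorm β w) ∧
    (∀ ε : ℝ, 0 < ε → ∃ η : ℝ, 0 < η ∧ ∀ w : (Fin D → ℤ) → ℂ,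
        WSummable β w → wnorm β w ≤ η →
        WSummable β (Phi p (c + w) - Phi p c - Lder p c w) ∧
        wnorm β (Phi p (c + w) - Phi p c - Lder p c w) ≤ ε * wnorm β w) :=
  stmt5_general D p β hβ c hc
end
end

section
/- Let r > 0. There exists δ₀ ∈ (0,1), depending only on r, with the following property. Let δ ∈ (0, δ₀], let 0 < T ≤ δ^{−r/10}, and let g : [0,T] → [0,∞) be continuous with g(0) ≤ δ^{r/2} and such that for every t ∈ [0,T], g(t) ≤ (1+t) g(0) + (1+t³) δ^{r/2} + (1+t³) δ^{r/2} (sup_{0 ≤ τ ≤ t} g(τ))². Then g(t) ≤ 1 for all t ∈ [0,T]. -/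
/-- Final bootstrap closing the almost global existence argument: the (rescaled) remainder
stays bounded by `1` for times up to `δ^{-r/10}`. -/
theorem stmt9 (r : ℝ) (hr : 0 < r) :
    ∃ δ₀ : ℝ, δ₀ ∈ Set.Ioo (0 : ℝ) 1 ∧
      ∀ δ : ℝ, 0 < δ → δ ≤ δ₀ →
      ∀ T : ℝ, 0 < T → T ≤ δ ^ (-(r / 10)) →
      ∀ g : ℝ → ℝ, ContinuousOn g (Set.Icc 0 T) → (∀ t ∈ Set.Icc (0 : ℝ) T, 0 ≤ g t) →
      g 0 ≤ δ ^ (r / 2) →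
      (∀ t ∈ Set.Icc (0 : ℝ) T,
        g t ≤ (1 + t) * g 0 + (1 + t ^ 3) * δ ^ (r / 2)
          + (1 + t ^ 3) * δ ^ (r / 2) * (sSup (g '' Set.Icc 0 t)) ^ 2) →
      ∀ t ∈ Set.Icc (0 : ℝ) T, g t ≤ 1 := by
  refine ⟨min (1/2) ((1/24 : ℝ) ^ (5/r)), ⟨lt_min (by norm_num) (by positivity),
    lt_of_le_of_lt (min_le_left _ _) (by norm_num)⟩, ?_⟩
  intro δ hδ0 hδ T hT0 hTle g hgc hgnn hg0 hineq
  have hδ1 : δ ≤ 1 := le_trans hδ (le_trans (min_le_left _ _) (by norm_num))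
  have hb : δ ^ (r/5) ≤ 1/24 := by
    have h1 : δ ^ (r/5) ≤ ((1/24:ℝ) ^ (5/r)) ^ (r/5) :=
      Real.rpow_le_rpow hδ0.le (le_trans hδ (min_le_right _ _)) (by positivity)
    have h2 : (((1/24:ℝ) ^ (5/r)) ^ (r/5)) = (1/24:ℝ) := by
      rw [← Real.rpow_mul (by norm_num), show (5/r) * (r/5) = 1 by field_simp, Real.rpow_one]
    rw [h2] at h1; exact h1
  have hab : δ ^ (r/2) ≤ δ ^ (r/5) :=
    Real.rpow_le_rpow_of_exponent_ge hδ0 hδ1 (by linarith)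
  have hapos : 0 < δ ^ (r/2) := Real.rpow_pos_of_pos hδ0 _
  have hbpos : 0 < δ ^ (r/5) := Real.rpow_pos_of_pos hδ0 _
  have hc1 : (1:ℝ) ≤ δ ^ (-(r/10)) :=
    Real.one_le_rpow_of_pos_of_le_one_of_nonpos hδ0 hδ1 (by linarith)
  have hca : δ ^ (-(r/10)) * δ ^ (r/2) ≤ δ ^ (r/5) := by
    rw [← Real.rpow_add hδ0]
    exact Real.rpow_le_rpow_of_exponent_ge hδ0 hδ1 (by linarith)
  have hc3 : (δ ^ (-(r/10)))^3 * δ ^ (r/2) = δ ^ (r/5) := by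
    rw [← Real.rpow_natCast (δ ^ (-(r/10))) 3, ← Real.rpow_mul hδ0.le, ← Real.rpow_add hδ0]
    congr 1; push_cast; ring
  -- the key quantitative estimate
  have key : ∀ s, s ∈ Set.Icc (0:ℝ) T → (sSup (g '' Set.Icc 0 s))^2 ≤ 1 → g s ≤ 1/4 := by
    intro s hs hM
    have hs0 : 0 ≤ s := hs.1
    have hsc : s ≤ δ ^ (-(r/10)) := le_trans hs.2 hTle
    have hineq' := hineq s hs
    have hM0 : 0 ≤ (sSup (g '' Set.Icc 0 s))^2 := sq_nonneg _
    have hg00 : 0 ≤ g 0 := hgnn 0 ⟨le_refl 0, hT0.le⟩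
    set c := δ ^ (-(r/10)) with hcdef
    set a := δ ^ (r/2) with hadef
    set b := δ ^ (r/5) with hbdef
    have hs3 : s^3 ≤ c^3 := pow_le_pow_left₀ hs0 hsc 3
    have h1 : (1+s) * g 0 ≤ 2*b := by
      have := mul_le_mul (by linarith : 1+s ≤ 1+c) hg0 hg00 (by linarith : (0:ℝ) ≤ 1+c)
      nlinarith
    have h2 : (1+s^3) * a ≤ 2*b := by
      have := mul_le_mul_of_nonneg_right hs3 hapos.le
      nlinarith
    have h3 : (1+s^3) * a * (sSup (g '' Set.Icc 0 s))^2 ≤ 2*b := by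
      have := mul_le_mul_of_nonneg_left hM (by positivity : (0:ℝ) ≤ (1+s^3)*a)
      nlinarith
    linarith
  -- bootstrap via contradiction
  by_contra hcon
  push_neg at hcon
  obtain ⟨t₁, ht₁, hgt₁⟩ := hcon
  set B := {t | t ∈ Set.Icc (0:ℝ) T ∧ 1/2 ≤ g t} with hBdef
  have hBne : B.Nonempty := ⟨t₁, ht₁, by linarith⟩
  have hBclosed : IsClosed B := by
    have h := hgc.preimage_isClosed_of_isClosed isClosed_Icc (isClosed_Ici (a := (1/2:ℝ)))
    have he : B = Set.Icc 0 T ∩ g ⁻¹' Set.Ici (1/2) := by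
      ext x; simp [hBdef, Set.mem_Ici]
    rw [he]; exact h
  have hBbdd : BddBelow B := ⟨0, fun x hx => hx.1.1⟩
  set t₀ := sInf B with ht₀def
  have ht₀B : t₀ ∈ B := hBclosed.csInf_mem hBne hBbdd
  obtain ⟨ht₀mem, hgt₀⟩ := ht₀B
  have ht₀pos : 0 < t₀ := by
    rcases lt_or_eq_of_le ht₀mem.1 with h | h
    · exact h
    · exfalso; rw [← h] at hgt₀; linarith [le_trans hg0 hab]
  have hlt : ∀ s, 0 ≤ s → s < t₀ → g s < 1/2 := by
    intro s hs0 hst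
    by_contra h
    push_neg at h
    have hsB : s ∈ B := ⟨⟨hs0, le_trans hst.le ht₀mem.2⟩, h⟩
    exact absurd (csInf_le hBbdd hsB) (not_le.mpr hst)
  have hgt₀le : g t₀ ≤ 1/2 := by
    have hcw : ContinuousWithinAt g (Set.Ico 0 t₀) t₀ :=
      (hgc t₀ ht₀mem).mono (fun x hx => ⟨hx.1, le_trans hx.2.le ht₀mem.2⟩)
    have hclos : t₀ ∈ closure (Set.Ico (0:ℝ) t₀) := by
      rw [closure_Ico (ne_of_lt ht₀pos)]
      exact ⟨ht₀pos.le, le_refl _⟩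
    haveI hnb : (nhdsWithin t₀ (Set.Ico (0:ℝ) t₀)).NeBot :=
      mem_closure_iff_nhdsWithin_neBot.mp hclos
    refine le_of_tendsto hcw ?_
    filter_upwards [self_mem_nhdsWithin] with x hx
    exact (hlt x hx.1 hx.2).le
  have hub : ∀ y ∈ g '' Set.Icc 0 t₀, y ≤ 1/2 := by
    rintro y ⟨s, hs, rfl⟩
    rcases lt_or_eq_of_le hs.2 with h | h
    · exact (hlt s hs.1 h).le
    · rw [h]; exact hgt₀le
  have hMle : sSup (g '' Set.Icc 0 t₀) ≤ 1/2 := Real.sSup_le hub (by norm_num)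
  have hM0 : 0 ≤ sSup (g '' Set.Icc 0 t₀) := by
    have hmem : g t₀ ∈ g '' Set.Icc 0 t₀ := ⟨t₀, ⟨ht₀pos.le, le_refl _⟩, rfl⟩
    have hbdd : BddAbove (g '' Set.Icc 0 t₀) := ⟨1/2, hub⟩
    exact le_trans (hgnn t₀ ht₀mem) (le_csSup hbdd hmem)
  have hkey := key t₀ ht₀mem (by nlinarith)
  linarith
end

section
/- Let d ∈ ℕ with d ≥ 1, p ∈ ℕ with p ≥ 1, δ ∈ ℝ, and T > 0. Suppose u, v : [0,T] × 𝕋^d → ℂ are continuous, continuously differentiable in t, twice continuously differentiable in x, both satisfy the nonlinear Schrödinger equation i ∂_t u = −Δu + δ |u|^{2p} u at every point of [0,T] × 𝕋^d, and u(0,·) = v(0,·). Then u(t,x) = v(t,x) for all (t,x) ∈ [0,T] × 𝕋^d. -/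
open scoped BigOperators

/-- The Laplacian on `𝕋^d`: sum of second derivatives along the coordinate directions. -/
noncomputable def lap {d : ℕ} (f : (Fin d → ℝ) → ℂ) (x : Fin d → ℝ) : ℂ :=
  ∑ i, iteratedDeriv 2 (fun s => f (Function.update x i s)) (x i)

/-!
Let `w = u - v` and `E(t) = ∫ |w(t)|²` over the cube `[0, 2π]^d`. Since `i wₜ = -Δw + N` with
`N = δ (|u|^{2p} u - |v|^{2p} v)`, we get `E' = 2 ∫ Im (w̄ (-Δw + N))`. The Laplacian term vanishes:
`Im (w̄ Δw)` is the divergence of the flux `(Im (w̄ ∂ᵢw))ᵢ` (because `Im |∂ᵢw|² = 0`), and the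
contributions of opposite faces of the cube cancel by periodicity. On the compact set
`[0, T] × [0, 2π]^d` both solutions are bounded by some `M`, so `|N| ≤ |δ| (2p + 1) M^{2p} |w|` and
`E' ≤ K E`. As `E(0) = 0`, Gronwall's lemma gives `E ≡ 0`; by continuity `w` vanishes on the cube,
and by periodicity everywhere.
-/

open Set MeasureTheory Filter Topology ComplexConjugate Real

theorem norm_ofReal_norm_pow_mul_sub_le (m : ℕ) {M : ℝ} {a b : ℂ} (ha : ‖a‖ ≤ M)
    (hb : ‖b‖ ≤ M) :
    ‖(‖a‖ : ℂ) ^ m * a - (‖b‖ : ℂ) ^ m * b‖ ≤ (m + 1) * M ^ m * ‖a - b‖ := by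
  have hM : 0 ≤ M := (norm_nonneg a).trans ha
  have hpow : |‖a‖ ^ m - ‖b‖ ^ m| ≤ m * M ^ (m - 1) * ‖a - b‖ :=
    calc |‖a‖ ^ m - ‖b‖ ^ m| ≤ |‖a‖ - ‖b‖| * m * max |‖a‖| |‖b‖| ^ (m - 1) :=
          abs_pow_sub_pow_le ..
      _ ≤ ‖a - b‖ * m * M ^ (m - 1) := by
          gcongr
          · exact abs_norm_sub_norm_le a b
          · simpa using ⟨ha, hb⟩
      _ = m * M ^ (m - 1) * ‖a - b‖ := by ring
  calc ‖(‖a‖ : ℂ) ^ m * a - (‖b‖ : ℂ) ^ m * b‖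
      = ‖(‖a‖ : ℂ) ^ m * (a - b) + ((‖a‖ ^ m - ‖b‖ ^ m : ℝ) : ℂ) * b‖ := by
        push_cast; ring_nf
    _ ≤ M ^ m * ‖a - b‖ + m * M ^ (m - 1) * ‖a - b‖ * M := by
        refine norm_add_le_of_le ?_ ?_ <;> rw [norm_mul]
        · rw [norm_pow, Complex.norm_real, norm_norm]
          gcongr
        · rw [Complex.norm_real, Real.norm_eq_abs]
          gcongr
    _ = (m + 1) * M ^ m * ‖a - b‖ := by
        rcases m with _ | m
        · simp
        · simp only [Nat.add_sub_cancel, pow_succ]; push_cast; ring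

noncomputable def partialDeriv {d : ℕ} {E : Type*} [NormedAddCommGroup E] [NormedSpace ℝ E]
    (i : Fin d) (f : (Fin d → ℝ) → E) (x : Fin d → ℝ) : E :=
  fderiv ℝ f x (Pi.single i 1)

section partialDeriv

variable {d : ℕ} {E : Type*} [NormedAddCommGroup E] [NormedSpace ℝ E] {f g : (Fin d → ℝ) → E}
  {i : Fin d}

theorem hasDerivAt_comp_update {x : Fin d → ℝ} {s : ℝ}
    (hf : DifferentiableAt ℝ f (Function.update x i s)) :
    HasDerivAt (fun s => f (Function.update x i s)) (partialDeriv i f (Function.update x i s)) s :=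
  hf.hasFDerivAt.comp_hasDerivAt s (hasDerivAt_update x i s)

theorem ContDiff.partialDeriv {n : WithTop ℕ∞} (hf : ContDiff ℝ (n + 1) f) :
    ContDiff ℝ n (partialDeriv i f) :=
  (hf.fderiv_right le_rfl).clm_apply contDiff_const

theorem partialDeriv_sub (hf : Differentiable ℝ f) (hg : Differentiable ℝ g) :
    partialDeriv i (f - g) = partialDeriv i f - partialDeriv i g := by
  ext x
  simp [partialDeriv, fderiv_sub (hf x) (hg x)]

theorem partialDeriv_add_const_of_periodic {c : Fin d → ℝ} (hf : ∀ x, f (x + c) = f x)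
    (x : Fin d → ℝ) : partialDeriv i f (x + c) = partialDeriv i f x := by
  rw [partialDeriv, ← fderiv_comp_add_right]
  simp only [hf]
  rfl

end partialDeriv

section Laplacian

variable {d : ℕ}

theorem lap_eq_sum_partialDeriv {f : (Fin d → ℝ) → ℂ} (hf : ContDiff ℝ 2 f) (x : Fin d → ℝ) :
    lap f x = ∑ i, partialDeriv i (partialDeriv i f) x := by
  refine Finset.sum_congr rfl fun i _ => ?_
  have hf₁ : Differentiable ℝ f := hf.differentiable two_ne_zero
  have hf₂ : Differentiable ℝ (partialDeriv i f) :=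
    (ContDiff.partialDeriv (n := 1) hf).differentiable one_ne_zero
  have hderiv : deriv (fun s => f (Function.update x i s)) =
      fun s => partialDeriv i f (Function.update x i s) :=
    funext fun s => (hasDerivAt_comp_update (hf₁ _)).deriv
  rw [iteratedDeriv_succ, iteratedDeriv_one, hderiv, (hasDerivAt_comp_update (hf₂ _)).deriv,
    Function.update_eq_self]

theorem lap_sub {f g : (Fin d → ℝ) → ℂ} (hf : ContDiff ℝ 2 f) (hg : ContDiff ℝ 2 g) :
    lap (f - g) = lap f - lap g := by
  ext x
  rw [Pi.sub_apply, lap_eq_sum_partialDeriv (f := f - g) (hf.sub hg),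
    lap_eq_sum_partialDeriv hf, lap_eq_sum_partialDeriv hg, ← Finset.sum_sub_distrib]
  simp only [partialDeriv_sub (hf.differentiable two_ne_zero) (hg.differentiable two_ne_zero),
    partialDeriv_sub ((ContDiff.partialDeriv (n := 1) hf).differentiable one_ne_zero)
      ((ContDiff.partialDeriv (n := 1) hg).differentiable one_ne_zero), Pi.sub_apply]

theorem continuous_lap {f : (Fin d → ℝ) → ℂ} (hf : ContDiff ℝ 2 f) : Continuous (lap f) := by
  rw [funext (lap_eq_sum_partialDeriv hf)]
  exact continuous_finsetSum _ fun i _ =>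
    (ContDiff.partialDeriv (n := 0) (ContDiff.partialDeriv (n := 1) hf)).continuous

theorem HasFDerivAt.im_conj_mul {E : Type*} [NormedAddCommGroup E] [NormedSpace ℝ E]
    {f g : E → ℂ} {f' g' : E →L[ℝ] ℂ} {x : E} (hf : HasFDerivAt f f' x)
    (hg : HasFDerivAt g g' x) :
    HasFDerivAt (fun y => (conj (f y) * g y).im)
      (Complex.imCLM.comp (conj (f x) • g' + g x • (Complex.conjCLE : ℂ →L[ℝ] ℂ).comp f')) x :=
  Complex.imCLM.hasFDerivAt.comp x
    (((Complex.conjCLE : ℂ →L[ℝ] ℂ).hasFDerivAt.comp x hf).mul hg)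

theorem integral_im_conj_mul_lap_eq_zero {a b : Fin d → ℝ} (hab : a ≤ b)
    {h : (Fin d → ℝ) → ℂ} (hh : ContDiff ℝ 2 h)
    (hper : ∀ i x, h (x + Pi.single i (b i - a i)) = h x) :
    ∫ x in Icc a b, (conj (h x) * lap h x).im = 0 := by
  rcases d with _ | n
  · simp [lap]
  have hh₁ : ∀ i, ContDiff ℝ 1 (partialDeriv i h) := fun i => ContDiff.partialDeriv hh
  let Φ : Fin (n + 1) → (Fin (n + 1) → ℝ) → ℝ := fun i y =>
    (conj (h y) * partialDeriv i h y).im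
  let Φ' : Fin (n + 1) → (Fin (n + 1) → ℝ) → (Fin (n + 1) → ℝ) →L[ℝ] ℝ := fun i y =>
    Complex.imCLM.comp (conj (h y) • fderiv ℝ (partialDeriv i h) y +
      partialDeriv i h y • (Complex.conjCLE : ℂ →L[ℝ] ℂ).comp (fderiv ℝ h y))
  have hΦ : ∀ i y, HasFDerivAt (Φ i) (Φ' i y) y := fun i y =>
    (hh.differentiable two_ne_zero y).hasFDerivAt.im_conj_mul
      ((hh₁ i).differentiable one_ne_zero y).hasFDerivAt
  have hΦ'_apply : ∀ i y, Φ' i y (Pi.single i 1) =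
      (conj (h y) * partialDeriv i (partialDeriv i h) y).im +
        (partialDeriv i h y * conj (partialDeriv i h y)).im := fun i y => rfl
  have hdiv : (fun y => ∑ i, Φ' i y (Pi.single i 1)) = fun y => (conj (h y) * lap h y).im := by
    ext y
    simp [hΦ'_apply, Complex.mul_conj, lap_eq_sum_partialDeriv hh, Finset.mul_sum]
  have hface : ∀ i y, Φ i (i.insertNth (b i) y) = Φ i (i.insertNth (a i) y) := by
    intro i y
    rw [eq_add_of_sub_eq' (Fin.insertNth_sub_same (α := fun _ => ℝ) i (b i) (a i) y)]
    simp only [Φ, hper, partialDeriv_add_const_of_periodic (hper i)]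
  have hdivergence := integral_divergence_of_hasFDerivAt_off_countable' a b hab Φ Φ' ∅
    countable_empty (fun i => ?_) (fun y _ i => hΦ i y) ?_
  · rw [hdiv] at hdivergence
    rw [hdivergence]
    simp [hface]
  · exact (Complex.continuous_im.comp ((Complex.continuous_conj.comp hh.continuous).mul
      (hh₁ i).continuous)).continuousOn
  · rw [hdiv]
    exact (Complex.continuous_im.comp ((Complex.continuous_conj.comp hh.continuous).mul
      (continuous_lap hh))).continuousOn.integrableOn_compact isCompact_Icc

theorem setIntegral_inner_le_of_mul_I_eq_neg_lap_add {a b : Fin d → ℝ} (hab : a ≤ b)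
    {w w' N : (Fin d → ℝ) → ℂ} {L : ℝ} (hw : ContDiff ℝ 2 w) (hw' : Continuous w')
    (hper : ∀ i x, w (x + Pi.single i (b i - a i)) = w x)
    (heq : ∀ x, Complex.I * w' x = -lap w x + N x) (hN : ∀ x ∈ Icc a b, ‖N x‖ ≤ L * ‖w x‖) :
    ∫ x in Icc a b, 2 * inner ℝ (w x) (w' x) ≤ 2 * L * ∫ x in Icc a b, ‖w x‖ ^ 2 := by
  have hN_eq : N = fun x => Complex.I * w' x + lap w x := funext fun x => by rw [heq]; ring
  -- `Re (conj w · w') = Im (conj w · i w')`, and `i w' = -Δw + N`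
  have hpt : ∀ x, 2 * inner ℝ (w x) (w' x) + 2 * (conj (w x) * lap w x).im =
      2 * (conj (w x) * N x).im := by
    intro x
    simp only [hN_eq, Complex.inner, Complex.mul_im, Complex.mul_re, Complex.add_re,
      Complex.add_im, Complex.conj_re, Complex.conj_im, Complex.I_re, Complex.I_im]
    ring
  have hw_cont := hw.continuous
  have hint : ∀ {f : (Fin d → ℝ) → ℝ}, Continuous f → IntegrableOn f (Icc a b) := fun hf =>
    hf.continuousOn.integrableOn_compact isCompact_Icc
  calc ∫ x in Icc a b, 2 * inner ℝ (w x) (w' x)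
      = ∫ x in Icc a b, (2 * inner ℝ (w x) (w' x) + 2 * (conj (w x) * lap w x).im) := by
        rw [integral_add (hint (by fun_prop)) (hint ?_),
          integral_const_mul (2 : ℝ) fun x => (conj (w x) * lap w x).im,
          integral_im_conj_mul_lap_eq_zero hab hw hper, mul_zero, add_zero]
        exact continuous_const.mul (Complex.continuous_im.comp
          ((Complex.continuous_conj.comp hw_cont).mul (continuous_lap hw)))
    _ = ∫ x in Icc a b, 2 * (conj (w x) * N x).im := by simp_rw [hpt]
    _ ≤ ∫ x in Icc a b, 2 * L * ‖w x‖ ^ 2 := by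
        refine setIntegral_mono_on (hint ?_) (hint (by fun_prop)) measurableSet_Icc
          fun x hx => ?_
        · rw [hN_eq]
          exact continuous_const.mul (Complex.continuous_im.comp
            ((Complex.continuous_conj.comp hw_cont).mul
              ((continuous_const.mul hw').add (continuous_lap hw))))
        · calc 2 * (conj (w x) * N x).im ≤ 2 * (‖w x‖ * ‖N x‖) := by
                rw [← RCLike.norm_conj (w x), ← norm_mul]
                gcongr
                exact Complex.im_le_norm _
            _ ≤ 2 * (‖w x‖ * (L * ‖w x‖)) := by gcongr; exact hN x hx
            _ = 2 * L * ‖w x‖ ^ 2 := by ring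
    _ = 2 * L * ∫ x in Icc a b, ‖w x‖ ^ 2 := integral_const_mul _ _

theorem setIntegral_inner_sub_le_of_nls {m : ℕ} {δ M : ℝ} {u v ut vt : (Fin d → ℝ) → ℂ}
    (hu : ContDiff ℝ 2 u) (hv : ContDiff ℝ 2 v) (hut : Continuous ut) (hvt : Continuous vt)
    (hu_per : ∀ x (k : Fin d → ℤ), u (x + fun i => 2 * π * (k i : ℝ)) = u x)
    (hv_per : ∀ x (k : Fin d → ℤ), v (x + fun i => 2 * π * (k i : ℝ)) = v x)
    (hu_eq : ∀ x, Complex.I * ut x = -lap u x + (δ : ℂ) * (‖u x‖ : ℂ) ^ m * u x)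
    (hv_eq : ∀ x, Complex.I * vt x = -lap v x + (δ : ℂ) * (‖v x‖ : ℂ) ^ m * v x)
    (hM : ∀ x ∈ Icc (0 : Fin d → ℝ) (fun _ => 2 * π), ‖u x‖ ≤ M ∧ ‖v x‖ ≤ M) :
    ∫ x in Icc (0 : Fin d → ℝ) (fun _ => 2 * π), 2 * inner ℝ (u x - v x) (ut x - vt x) ≤
      2 * (|δ| * ((m + 1) * M ^ m)) *
        ∫ x in Icc (0 : Fin d → ℝ) (fun _ => 2 * π), ‖u x - v x‖ ^ 2 := by
  have hshift : ∀ i (x : Fin d → ℝ),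
      x + Pi.single i (2 * π) =
        x + fun j => 2 * π * ((Pi.single i 1 : Fin d → ℤ) j : ℝ) := by
    intro i x
    congr 1
    ext j
    rcases eq_or_ne j i with rfl | h <;> simp [*]
  refine setIntegral_inner_le_of_mul_I_eq_neg_lap_add (w := u - v) (fun _ => two_pi_pos.le)
    (hu.sub hv) (hut.sub hvt)
    (fun i x => by rw [Pi.sub_apply, Pi.sub_apply, sub_zero, hshift, hu_per, hv_per])
    (N := fun x => δ * ((‖u x‖ : ℂ) ^ m * u x - (‖v x‖ : ℂ) ^ m * v x)) (fun x => ?_)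
    (fun x hx => ?_)
  · rw [lap_sub hu hv, Pi.sub_apply, mul_sub, hu_eq, hv_eq]
    ring
  · rw [norm_mul, Complex.norm_real, Real.norm_eq_abs, mul_assoc]
    exact mul_le_mul_of_nonneg_left
      (norm_ofReal_norm_pow_mul_sub_le m (hM x hx).1 (hM x hx).2) (abs_nonneg δ)

end Laplacian

theorem eqOn_zero_of_le_mul_integral {F : ℝ → ℝ} {K a b : ℝ} (hF : ContinuousOn F (Icc a b))
    (hF₀ : ∀ t ∈ Icc a b, 0 ≤ F t) (hle : ∀ t ∈ Icc a b, F t ≤ K * ∫ s in a..t, F s) :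
    EqOn F 0 (Icc a b) := by
  rcases lt_or_ge b a with hba | hab
  · simp [Icc_eq_empty_of_lt hba]
  set H := fun t => ∫ s in a..t, F s
  have hH_cont : ContinuousOn H (Icc a b) := by
    simpa [uIcc_of_le hab] using intervalIntegral.continuousOn_primitive_interval
      (hF.integrableOn_compact isCompact_Icc |>.mono_set (uIcc_of_le hab).subset)
  have hH_deriv : ∀ t ∈ Ico a b, HasDerivWithinAt H (F t) (Ici t) t := by
    intro t ht
    have hmem : Icc a b ∈ 𝓝[>] t := mem_nhdsWithin.mpr ⟨Iio b, isOpen_Iio, ht.2,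
      fun s hs => ⟨ht.1.trans (le_of_lt hs.2), le_of_lt hs.1⟩⟩
    exact intervalIntegral.integral_hasDerivWithinAt_right
      ((hF.mono (Icc_subset_Icc_right ht.2.le)).intervalIntegrable_of_Icc ht.1)
      ((hF.stronglyMeasurableAtFilter_nhdsWithin measurableSet_Icc t).filter_mono
        (nhdsWithin_le_of_mem hmem))
      ((hF t (Ico_subset_Icc_self ht)).mono_of_mem_nhdsWithin hmem)
  have hH₀ : ∀ t ∈ Icc a b, 0 ≤ H t := fun t ht =>
    intervalIntegral.integral_nonneg ht.1 fun s hs => hF₀ s ⟨hs.1, hs.2.trans ht.2⟩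
  have hH_zero : ∀ t ∈ Icc a b, H t = 0 := fun t ht => by
    simpa [gronwallBound_ε0_δ0] using norm_le_gronwallBound_of_norm_deriv_right_le
      (δ := 0) (ε := 0) hH_cont hH_deriv (by simp [H]) (fun t ht => by
        rw [add_zero, Real.norm_of_nonneg (hF₀ t (Ico_subset_Icc_self ht)),
          Real.norm_of_nonneg (hH₀ t (Ico_subset_Icc_self ht))]
        exact hle t (Ico_subset_Icc_self ht)) t ht
  intro t ht
  exact le_antisymm ((hle t ht).trans_eq (by simp [H, hH_zero t ht])) (hF₀ t ht)

theorem ContinuousOn.continuous_of_prod_univ {X Y Z : Type*} [TopologicalSpace X]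
    [TopologicalSpace Y] [TopologicalSpace Z] {f : X → Y → Z} {s : Set X}
    (hf : ContinuousOn (fun q : X × Y => f q.1 q.2) (s ×ˢ univ)) {x : X} (hx : x ∈ s) :
    Continuous (f x) :=
  continuousOn_univ.mp <| hf.comp (continuous_const.prodMk continuous_id).continuousOn
    fun y _ => ⟨hx, mem_univ y⟩

section ParametricIntegral

variable {X : Type*} [TopologicalSpace X] [T2Space X] [MeasurableSpace X] [OpensMeasurableSpace X]
  {μ : Measure X} [IsFiniteMeasureOnCompacts μ] {Q : Set X}

theorem continuousOn_setIntegral_of_continuousOn_prod {I : Set ℝ} (hI : IsCompact I)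
    (hQ : IsCompact Q) {f : ℝ → X → ℝ}
    (hf : ContinuousOn (fun q : ℝ × X => f q.1 q.2) (I ×ˢ Q)) :
    ContinuousOn (fun t => ∫ x in Q, f t x ∂μ) I := by
  obtain ⟨C, hC⟩ := (hI.prod hQ).exists_bound_of_continuousOn hf
  have hQm := hQ.isClosed.measurableSet
  refine continuousOn_of_dominated (bound := fun _ => C) (fun t ht => ?_) (fun t ht => ?_)
    (integrableOn_const hQ.measure_ne_top) ?_
  · exact (hf.comp (continuous_const.prodMk continuous_id).continuousOn
      fun x hx => ⟨ht, hx⟩).aestronglyMeasurable hQm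
  · exact (ae_restrict_iff' hQm).mpr (ae_of_all _ fun x hx => hC (t, x) ⟨ht, hx⟩)
  · exact (ae_restrict_iff' hQm).mpr (ae_of_all _ fun x hx =>
      hf.comp (continuous_id.prodMk continuous_const).continuousOn fun t ht => ⟨ht, hx⟩)

theorem setIntegral_sub_eq_intervalIntegral_setIntegral [SFinite μ] {f g : ℝ → X → ℝ}
    {a b t : ℝ} (ht : t ∈ Icc a b) (hQ : IsCompact Q)
    (hfg : ∀ x ∈ Q, ∀ s ∈ Icc a b, HasDerivWithinAt (f · x) (g s x) (Icc a b) s)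
    (hg : ContinuousOn (fun q : ℝ × X => g q.1 q.2) (Icc a b ×ˢ Q)) :
    ∫ x in Q, (f t x - f a x) ∂μ = ∫ s in a..t, ∫ x in Q, g s x ∂μ := by
  have hsub : Icc a t ⊆ Icc a b := Icc_subset_Icc_right ht.2
  have hg' : ContinuousOn (fun q : ℝ × X => g q.1 q.2) (Icc a t ×ˢ Q) :=
    hg.mono (prod_mono hsub subset_rfl)
  have hFTC : ∀ x ∈ Q, f t x - f a x = ∫ s in Ioc a t, g s x := by
    intro x hx
    rw [← intervalIntegral.integral_of_le ht.1]
    refine (intervalIntegral.integral_eq_sub_of_hasDeriv_right_of_le ht.1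
      (fun s hs => (hfg x hx s (hsub hs)).continuousWithinAt.mono hsub) (fun s hs => ?_) ?_).symm
    · exact ((hfg x hx s (hsub (Ioo_subset_Icc_self hs))).hasDerivAt
        (Icc_mem_nhds hs.1 (hs.2.trans_le ht.2))).hasDerivWithinAt
    · exact (hg'.comp (continuous_id.prodMk continuous_const).continuousOn
        fun s hs => ⟨hs, hx⟩).intervalIntegrable_of_Icc ht.1
  rw [setIntegral_congr_fun hQ.isClosed.measurableSet hFTC, intervalIntegral.integral_of_le ht.1]
  refine integral_integral_swap ?_
  rw [Measure.prod_restrict]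
  exact ((hg'.comp continuous_swap.continuousOn fun q hq => ⟨hq.2, hq.1⟩).integrableOn_compact
    (hQ.prod isCompact_Icc)).mono_set (prod_mono subset_rfl Ioc_subset_Icc_self)

theorem setIntegral_eq_zero_of_setIntegral_deriv_le [SFinite μ] {φ ψ : ℝ → X → ℝ} {K a b : ℝ}
    (hQ : IsCompact Q) (hφ : ContinuousOn (fun q : ℝ × X => φ q.1 q.2) (Icc a b ×ˢ Q))
    (hψ : ContinuousOn (fun q : ℝ × X => ψ q.1 q.2) (Icc a b ×ˢ Q))
    (hφψ : ∀ x ∈ Q, ∀ s ∈ Icc a b, HasDerivWithinAt (φ · x) (ψ s x) (Icc a b) s)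
    (hφ₀ : ∀ s ∈ Icc a b, ∀ x ∈ Q, 0 ≤ φ s x) (ha : ∀ x ∈ Q, φ a x = 0)
    (hψφ : ∀ s ∈ Icc a b, ∫ x in Q, ψ s x ∂μ ≤ K * ∫ x in Q, φ s x ∂μ) :
    ∀ t ∈ Icc a b, ∫ x in Q, φ t x ∂μ = 0 := by
  have hQm := hQ.isClosed.measurableSet
  have hF := continuousOn_setIntegral_of_continuousOn_prod (μ := μ) isCompact_Icc hQ hφ
  have hG := continuousOn_setIntegral_of_continuousOn_prod (μ := μ) isCompact_Icc hQ hψ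
  refine fun t ht => eqOn_zero_of_le_mul_integral (K := K) hF
    (fun t ht => setIntegral_nonneg hQm (hφ₀ t ht)) (fun t ht => ?_) ht
  have hsub : Icc a t ⊆ Icc a b := Icc_subset_Icc_right ht.2
  calc ∫ x in Q, φ t x ∂μ = ∫ x in Q, (φ t x - φ a x) ∂μ :=
        setIntegral_congr_fun hQm fun x hx => by rw [ha x hx, sub_zero]
    _ = ∫ s in a..t, ∫ x in Q, ψ s x ∂μ :=
        setIntegral_sub_eq_intervalIntegral_setIntegral ht hQ hφψ hψ
    _ ≤ ∫ s in a..t, K * ∫ x in Q, φ s x ∂μ :=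
        intervalIntegral.integral_mono_on ht.1 ((hG.mono hsub).intervalIntegrable_of_Icc ht.1)
          (((hF.mono hsub).const_smul K).intervalIntegrable_of_Icc ht.1)
          fun s hs => hψφ s (hsub hs)
    _ = K * ∫ s in a..t, ∫ x in Q, φ s x ∂μ := intervalIntegral.integral_const_mul _ _

end ParametricIntegral

section Cube

variable {ι : Type*} [Fintype ι]

theorem Icc_subset_closure_interior_pi {a b : ι → ℝ} (hab : ∀ i, a i < b i) :
    Icc a b ⊆ closure (interior (Icc a b)) := by
  rw [← pi_univ_Icc, interior_pi_set finite_univ, closure_pi_set]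
  simp [interior_Icc, closure_Ioo (hab _).ne]

theorem eqOn_zero_of_setIntegral_eq_zero {a b : ι → ℝ} (hab : ∀ i, a i < b i)
    {f : (ι → ℝ) → ℝ} (hf : ContinuousOn f (Icc a b)) (hf₀ : ∀ x ∈ Icc a b, 0 ≤ f x)
    (h : ∫ x in Icc a b, f x = 0) : EqOn f 0 (Icc a b) :=
  Measure.eqOn_of_ae_eq
    ((setIntegral_eq_zero_iff_of_nonneg_ae ((ae_restrict_iff' measurableSet_Icc).mpr
      (ae_of_all _ hf₀)) (hf.integrableOn_compact isCompact_Icc)).mp h)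
    hf continuousOn_const (Icc_subset_closure_interior_pi hab)

end Cube

theorem exists_mem_Icc_eq_add_int_mul {ι : Type*} {c : ℝ} (hc : 0 < c) (x : ι → ℝ) :
    ∃ y ∈ Icc (0 : ι → ℝ) (fun _ => c), ∃ k : ι → ℤ, x = y + fun i => c * k i :=
  ⟨fun i => toIcoMod hc 0 (x i),
    ⟨fun i => (toIcoMod_mem_Ico' hc (x i)).1, fun i => (toIcoMod_mem_Ico' hc (x i)).2.le⟩,
    fun i => toIcoDiv hc 0 (x i),
    funext fun i => by simp [mul_comm c, ← zsmul_eq_mul, toIcoMod_add_toIcoDiv_zsmul]⟩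

theorem stmt11_general (d p : ℕ) (δ : ℝ) (T : ℝ)
    (u v : ℝ → (Fin d → ℝ) → ℂ) (ut vt : ℝ → (Fin d → ℝ) → ℂ)
    -- `u` and `v` are functions on the torus `𝕋^d = [0,2π)^d` (2π-periodicity)
    (hu_per : ∀ t ∈ Set.Icc (0 : ℝ) T, ∀ (x : Fin d → ℝ) (k : Fin d → ℤ),
      u t (x + fun i => 2 * Real.pi * (k i : ℝ)) = u t x)
    (hv_per : ∀ t ∈ Set.Icc (0 : ℝ) T, ∀ (x : Fin d → ℝ) (k : Fin d → ℤ),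
      v t (x + fun i => 2 * Real.pi * (k i : ℝ)) = v t x)
    -- continuity of `u`, `v`
    (hu_cont : ContinuousOn (fun q : ℝ × (Fin d → ℝ) => u q.1 q.2)
      (Set.Icc 0 T ×ˢ Set.univ))
    (hv_cont : ContinuousOn (fun q : ℝ × (Fin d → ℝ) => v q.1 q.2)
      (Set.Icc 0 T ×ˢ Set.univ))
    -- continuous differentiability in `t`, with derivatives `ut`, `vt`
    (hut_cont : ContinuousOn (fun q : ℝ × (Fin d → ℝ) => ut q.1 q.2)
      (Set.Icc 0 T ×ˢ Set.univ))
    (hvt_cont : ContinuousOn (fun q : ℝ × (Fin d → ℝ) => vt q.1 q.2)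
      (Set.Icc 0 T ×ˢ Set.univ))
    (hu_t : ∀ t ∈ Set.Icc (0 : ℝ) T, ∀ x : Fin d → ℝ,
      HasDerivWithinAt (fun s => u s x) (ut t x) (Set.Icc 0 T) t)
    (hv_t : ∀ t ∈ Set.Icc (0 : ℝ) T, ∀ x : Fin d → ℝ,
      HasDerivWithinAt (fun s => v s x) (vt t x) (Set.Icc 0 T) t)
    -- twice continuous differentiability in `x`
    (hu_x : ∀ t ∈ Set.Icc (0 : ℝ) T, ContDiff ℝ 2 (u t))
    (hv_x : ∀ t ∈ Set.Icc (0 : ℝ) T, ContDiff ℝ 2 (v t))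
    -- both satisfy the nonlinear Schrödinger equation
    (hu_eq : ∀ t ∈ Set.Icc (0 : ℝ) T, ∀ x : Fin d → ℝ,
      Complex.I * ut t x = -(lap (u t) x) + (δ : ℂ) * (‖u t x‖ : ℂ) ^ (2 * p) * u t x)
    (hv_eq : ∀ t ∈ Set.Icc (0 : ℝ) T, ∀ x : Fin d → ℝ,
      Complex.I * vt t x = -(lap (v t) x) + (δ : ℂ) * (‖v t x‖ : ℂ) ^ (2 * p) * v t x)
    -- same initial datum
    (h0 : ∀ x : Fin d → ℝ, u 0 x = v 0 x) :
    ∀ t ∈ Set.Icc (0 : ℝ) T, ∀ x : Fin d → ℝ, u t x = v t x := by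
  set Q : Set (Fin d → ℝ) := Icc 0 fun _ => 2 * π
  have hQ : IsCompact Q := isCompact_Icc
  have hIQ : Icc 0 T ×ˢ Q ⊆ Icc 0 T ×ˢ univ := prod_mono subset_rfl (subset_univ Q)
  obtain ⟨Mu, hMu⟩ := (isCompact_Icc.prod hQ).exists_bound_of_continuousOn (hu_cont.mono hIQ)
  obtain ⟨Mv, hMv⟩ := (isCompact_Icc.prod hQ).exists_bound_of_continuousOn (hv_cont.mono hIQ)
  have hF_zero : ∀ t ∈ Icc 0 T, ∫ x in Q, ‖u t x - v t x‖ ^ 2 = 0 := by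
    refine setIntegral_eq_zero_of_setIntegral_deriv_le
      (K := 2 * (|δ| * ((2 * p + 1 : ℕ) * max Mu Mv ^ (2 * p)))) hQ
      (((hu_cont.sub hv_cont).norm.pow 2).mono hIQ)
      ((continuousOn_const.mul ((hu_cont.sub hv_cont).inner (hut_cont.sub hvt_cont))).mono hIQ)
      (fun x _ s hs => ((hu_t s hs x).fun_sub (hv_t s hs x)).norm_sq)
      (fun _ _ _ _ => sq_nonneg _) (fun x _ => by simp [h0]) fun s hs => ?_
    exact_mod_cast setIntegral_inner_sub_le_of_nls (hu_x s hs) (hv_x s hs)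
      (hut_cont.continuous_of_prod_univ hs) (hvt_cont.continuous_of_prod_univ hs)
      (hu_per s hs) (hv_per s hs) (hu_eq s hs) (hv_eq s hs) fun x hx =>
        ⟨(hMu (s, x) ⟨hs, hx⟩).trans (le_max_left _ _),
          (hMv (s, x) ⟨hs, hx⟩).trans (le_max_right _ _)⟩
  intro t ht x
  obtain ⟨y, hy, k, rfl⟩ := exists_mem_Icc_eq_add_int_mul two_pi_pos x
  rw [hu_per t ht y k, hv_per t ht y k, ← sub_eq_zero, ← norm_eq_zero, ← sq_eq_zero_iff]
  exact eqOn_zero_of_setIntegral_eq_zero (fun _ => two_pi_pos)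
    ((((hu_x t ht).continuous.sub (hv_x t ht).continuous).norm.pow 2).continuousOn)
    (fun _ _ => sq_nonneg _) (hF_zero t ht) hy

/-- Uniqueness of classical solutions of `i uₜ = −Δu + δ|u|^{2p}u` on `[0,T] × 𝕋^d`:
two solutions with the same initial datum coincide. -/
theorem stmt11 (d p : ℕ) (hd : 1 ≤ d) (hp : 1 ≤ p) (δ : ℝ) (T : ℝ) (hT : 0 < T)
    (u v : ℝ → (Fin d → ℝ) → ℂ) (ut vt : ℝ → (Fin d → ℝ) → ℂ)
    -- `u` and `v` are functions on the torus `𝕋^d = [0,2π)^d` (2π-periodicity)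
    (hu_per : ∀ t ∈ Set.Icc (0 : ℝ) T, ∀ (x : Fin d → ℝ) (k : Fin d → ℤ),
      u t (x + fun i => 2 * Real.pi * (k i : ℝ)) = u t x)
    (hv_per : ∀ t ∈ Set.Icc (0 : ℝ) T, ∀ (x : Fin d → ℝ) (k : Fin d → ℤ),
      v t (x + fun i => 2 * Real.pi * (k i : ℝ)) = v t x)
    -- continuity of `u`, `v`
    (hu_cont : ContinuousOn (fun q : ℝ × (Fin d → ℝ) => u q.1 q.2)
      (Set.Icc 0 T ×ˢ Set.univ))
    (hv_cont : ContinuousOn (fun q : ℝ × (Fin d → ℝ) => v q.1 q.2)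
      (Set.Icc 0 T ×ˢ Set.univ))
    -- continuous differentiability in `t`, with derivatives `ut`, `vt`
    (hut_cont : ContinuousOn (fun q : ℝ × (Fin d → ℝ) => ut q.1 q.2)
      (Set.Icc 0 T ×ˢ Set.univ))
    (hvt_cont : ContinuousOn (fun q : ℝ × (Fin d → ℝ) => vt q.1 q.2)
      (Set.Icc 0 T ×ˢ Set.univ))
    (hu_t : ∀ t ∈ Set.Icc (0 : ℝ) T, ∀ x : Fin d → ℝ,
      HasDerivWithinAt (fun s => u s x) (ut t x) (Set.Icc 0 T) t)
    (hv_t : ∀ t ∈ Set.Icc (0 : ℝ) T, ∀ x : Fin d → ℝ,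
      HasDerivWithinAt (fun s => v s x) (vt t x) (Set.Icc 0 T) t)
    -- twice continuous differentiability in `x`
    (hu_x : ∀ t ∈ Set.Icc (0 : ℝ) T, ContDiff ℝ 2 (u t))
    (hv_x : ∀ t ∈ Set.Icc (0 : ℝ) T, ContDiff ℝ 2 (v t))
    -- both satisfy the nonlinear Schrödinger equation
    (hu_eq : ∀ t ∈ Set.Icc (0 : ℝ) T, ∀ x : Fin d → ℝ,
      Complex.I * ut t x = -(lap (u t) x) + (δ : ℂ) * (‖u t x‖ : ℂ) ^ (2 * p) * u t x)
    (hv_eq : ∀ t ∈ Set.Icc (0 : ℝ) T, ∀ x : Fin d → ℝ,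
      Complex.I * vt t x = -(lap (v t) x) + (δ : ℂ) * (‖v t x‖ : ℂ) ^ (2 * p) * v t x)
    -- same initial datum
    (h0 : ∀ x : Fin d → ℝ, u 0 x = v 0 x) :
    ∀ t ∈ Set.Icc (0 : ℝ) T, ∀ x : Fin d → ℝ, u t x = v t x :=
  stmt11_general d p δ T u v ut vt hu_per hv_per hu_cont hv_cont hut_cont hvt_cont hu_t hv_t hu_x
    hv_x hu_eq hv_eq h0
end
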